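/- Every robust incentive compatible strategy is strongly myopically optimal at every chain that lies on a best response: if σ is robust, H ∈ BR(h₀, H₋₁, σ), and σ(H) failed to maximize V_d(H₋₁, ·) subject to V_e(H₋₁, 𝔠) ≥ V̄_e(H, σ) (the maximal expert value achievable by any best response of any type strictly coarser than H₋₁), then the H-deviation that offers a strongly myopically optimal contract 𝔠' at H and at all extensions of H would strictly improve the worst-case V_d, contradicting robustness. -/

import Mathlib

/-!
Suppose a contract `c` meets the expert constraint `Ve c ≥ V̄e(H, σ)`. Let the designer deviate
by offering (pullbacks of) `c` at `H` and at every extension of `H`, and `σ` elsewhere. Along a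
chain, the expert's value changes only on entering the extensions of `H`, where it becomes `Ve c`;
a proper prefix of `H` is worth at most a best response of a strictly coarser type, hence at most
`V̄e(H, σ) ≤ Ve c`, so the deviation is incentive compatible. Its worst case over the extensions
of `H` is `Vd c`, while the worst case of `σ` over best-response extensions is at most
`val Vd σ H`, `H` being one of them. Robustness compares the two: `Vd c ≤ val Vd σ H`.
-/

/-- A consistent sequence: a nonempty, strictly increasing chain beginning at `h₀`. -/
def Cons {𝓗 : Type} [Preorder 𝓗] (h₀ : 𝓗) (H : List 𝓗) : Prop :=
  H ≠ [] ∧ H.head? = some h₀ ∧ H.Chain' (· < ·)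

/-- Membership in `𝓗(h₀, h)`. -/
def Memb {𝓗 : Type} [Preorder 𝓗] (h₀ h : 𝓗) (H : List 𝓗) : Prop :=
  Cons h₀ H ∧ H.getLastD h₀ ≤ h

/-- The value to a player (with contract-value functional `V`) of the chain `H`
under strategy `σ`: the value of the contract offered at the final revelation. -/
def val {𝓗 : Type} [Preorder 𝓗] (h₀ : 𝓗) {C : 𝓗 → Type} (V : (h : 𝓗) → C h → ℝ)
    (σ : (H : List 𝓗) → C (H.getLastD h₀)) (H : List 𝓗) : ℝ :=
  V (H.getLastD h₀) (σ H)

/-- `H` is a best response to `σ` for type `h`. -/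
def BRs {𝓗 : Type} [Preorder 𝓗] (h₀ : 𝓗) {C : 𝓗 → Type} (Ve : (h : 𝓗) → C h → ℝ)
    (σ : (H : List 𝓗) → C (H.getLastD h₀)) (h : 𝓗) (H : List 𝓗) : Prop :=
  Memb h₀ h H ∧ ∀ H', Memb h₀ h H' → val h₀ Ve σ H' ≤ val h₀ Ve σ H

/-- Incentive compatibility: expert value monotone along extensions. -/
def ICs {𝓗 : Type} [Preorder 𝓗] (h₀ : 𝓗) {C : 𝓗 → Type} (Ve : (h : 𝓗) → C h → ℝ)
    (σ : (H : List 𝓗) → C (H.getLastD h₀)) : Prop :=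
  ∀ H H' : List 𝓗, Cons h₀ H → H' ≠ [] → H' <+: H → val h₀ Ve σ H' ≤ val h₀ Ve σ H

/-- `H` is reachable under `σ`: extended by some best response of some type. -/
def Reach {𝓗 : Type} [Preorder 𝓗] (h₀ : 𝓗) {C : 𝓗 → Type} (Ve : (h : 𝓗) → C h → ℝ)
    (σ : (H : List 𝓗) → C (H.getLastD h₀)) (H : List 𝓗) : Prop :=
  ∃ (h : 𝓗) (H' : List 𝓗), BRs h₀ Ve σ h H' ∧ H <+: H'

/-- `σ'` is an `H`-deviation from `σ`: it agrees with `σ` on all chains with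
strictly coarser final element, and differs at `H`. -/
def Dev {𝓗 : Type} [Preorder 𝓗] (h₀ : 𝓗) {C : 𝓗 → Type}
    (σ σ' : (H : List 𝓗) → C (H.getLastD h₀)) (H : List 𝓗) : Prop :=
  (∀ H' : List 𝓗, Cons h₀ H' → H'.getLastD h₀ < H.getLastD h₀ → σ' H' = σ H') ∧ σ' H ≠ σ H

/-- Robustness: at every reachable chain, the worst case (over best-response
extensions) of `σ` is at least the worst case (over all extensions) of any
incentive compatible `H`-deviation. -/
def Robust {𝓗 : Type} [Preorder 𝓗] (h₀ : 𝓗) {C : 𝓗 → Type} (Vd Ve : (h : 𝓗) → C h → ℝ)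
    (σ : (H : List 𝓗) → C (H.getLastD h₀)) : Prop :=
  ∀ H : List 𝓗, Cons h₀ H → Reach h₀ Ve σ H →
    ∀ σ' : (H : List 𝓗) → C (H.getLastD h₀), ICs h₀ Ve σ' → Dev h₀ σ σ' H →
      sInf {x : ℝ | ∃ H' : List 𝓗, Cons h₀ H' ∧ H <+: H' ∧ x = val h₀ Vd σ' H'} ≤
      sInf {x : ℝ | ∃ (h : 𝓗) (H' : List 𝓗), BRs h₀ Ve σ h H' ∧ H <+: H' ∧ x = val h₀ Vd σ H'}

namespace List

variable {α : Type}

theorem IsChain.getLastD_lt_of_isPrefix [Preorder α] {K H : List α} (hH : IsChain (· < ·) H)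
    (hK : K ≠ []) (hKH : K <+: H) (hne : K ≠ H) (d : α) :
    K.getLastD d < H.getLastD d := by
  obtain ⟨t, rfl⟩ := hKH
  have ht : t ≠ [] := by rintro rfl; simp at hne
  have hlast : (K ++ t).getLastD d = t.getLastD d := by
    simp [getLastD_eq_getLast?, getLast?_append, getLast?_eq_some_getLast ht]
  rw [hlast]
  refine (pairwise_append.mp (isChain_iff_pairwise.mp hH)).2.2 _ ?_ _ ?_ <;>
    simp [getLastD_eq_getLast?, getLast?_eq_some_getLast, getLast_mem, hK, ht]

theorem IsChain.getLastD_le_of_isPrefix [Preorder α] {K H : List α} (hH : IsChain (· < ·) H)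
    (hK : K ≠ []) (hKH : K <+: H) (d : α) :
    K.getLastD d ≤ H.getLastD d := by
  rcases eq_or_ne K H with rfl | hne
  · exact le_rfl
  · exact (hH.getLastD_lt_of_isPrefix hK hKH hne d).le

theorem IsPrefix.two_le_length {K H : List α} (hKH : K <+: H) (hK : K ≠ []) (hne : K ≠ H) :
    2 ≤ H.length := by
  have hlen : K.length ≠ H.length := fun e => hne (hKH.eq_of_length e)
  have := hKH.length_le
  have := length_pos_iff.mpr hK
  omega

end List

section Chains

variable {𝓗 : Type} [PartialOrder 𝓗] {h₀ : 𝓗}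

theorem Cons.of_isPrefix {K H : List 𝓗} (hH : Cons h₀ H) (hKH : K <+: H) (hK : K ≠ []) :
    Cons h₀ K := by
  refine ⟨hK, ?_, hH.2.2.prefix hKH⟩
  obtain ⟨t, rfl⟩ := hKH
  obtain ⟨a, K, rfl⟩ := List.exists_cons_of_ne_nil hK
  simpa using hH.2.1

theorem Cons.getLastD_le_of_isPrefix {K H : List 𝓗} (hH : Cons h₀ H) (hKH : K <+: H) :
    K.getLastD h₀ ≤ H.getLastD h₀ := by
  rcases eq_or_ne K [] with rfl | hK
  · exact hH.2.2.getLastD_le_of_isPrefix (by simp)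
      (List.singleton_prefix_iff_head?_eq_some.mpr hH.2.1) h₀
  · exact hH.2.2.getLastD_le_of_isPrefix hK hKH h₀

theorem finite_setOf_cons [Fintype 𝓗] (h₀ : 𝓗) : {H : List 𝓗 | Cons h₀ H}.Finite :=
  (List.finite_length_le 𝓗 (Fintype.card 𝓗)).subset fun _ hH =>
    List.Nodup.length_le_card ((List.isChain_iff_pairwise.mp hH.2.2).imp ne_of_lt)

end Chains

section Strategies

variable {𝓗 : Type} [PartialOrder 𝓗] {h₀ : 𝓗} {C : 𝓗 → Type}

theorem exists_BRs [Fintype 𝓗] (Ve : (h : 𝓗) → C h → ℝ)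
    (σ : (H : List 𝓗) → C (H.getLastD h₀)) {h : 𝓗} (hh : h₀ ≤ h) : ∃ H, BRs h₀ Ve σ h H :=
  have hfin : {H | Memb h₀ h H}.Finite := (finite_setOf_cons h₀).subset fun _ hH => hH.1
  let ⟨H, hH, hmax⟩ := Set.exists_max_image _ (val h₀ Ve σ) hfin
    ⟨[h₀], ⟨List.cons_ne_nil _ _, rfl, List.isChain_singleton h₀⟩, hh⟩
  ⟨H, hH, hmax⟩

theorem val_le_sSup_coarser_BRs [Fintype 𝓗] {Ve : (h : 𝓗) → C h → ℝ}
    {σ : (H : List 𝓗) → C (H.getLastD h₀)} {K H : List 𝓗} (hH : Cons h₀ H)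
    (hK : K ≠ []) (hKH : K <+: H) (hne : K ≠ H) :
    val h₀ Ve σ K ≤ sSup {x : ℝ | ∃ (h : 𝓗) (H' : List 𝓗),
      h < H.getLastD h₀ ∧ BRs h₀ Ve σ h H' ∧ x = val h₀ Ve σ H'} := by
  have hKc := hH.of_isPrefix hKH hK
  obtain ⟨B, hB⟩ := exists_BRs Ve σ (hKc.getLastD_le_of_isPrefix List.nil_prefix)
  have hbdd : BddAbove {x : ℝ | ∃ (h : 𝓗) (H' : List 𝓗),
      h < H.getLastD h₀ ∧ BRs h₀ Ve σ h H' ∧ x = val h₀ Ve σ H'} :=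
    ((finite_setOf_cons h₀).image (val h₀ Ve σ)).bddAbove.mono <| by
      rintro _ ⟨_, H', -, hH', rfl⟩
      exact ⟨H', hH'.1.1, rfl⟩
  calc val h₀ Ve σ K ≤ val h₀ Ve σ B := hB.2 K ⟨hKc, le_rfl⟩
    _ ≤ _ := le_csSup hbdd ⟨_, B, hH.2.2.getLastD_lt_of_isPrefix hK hKH hne h₀, hB, rfl⟩

theorem csInf_BRs_extension_le [Fintype 𝓗] {Vd Ve : (h : 𝓗) → C h → ℝ}
    {σ : (H : List 𝓗) → C (H.getLastD h₀)} {h : 𝓗} {H : List 𝓗} (hBR : BRs h₀ Ve σ h H) :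
    sInf {x : ℝ | ∃ (h : 𝓗) (H' : List 𝓗), BRs h₀ Ve σ h H' ∧ H <+: H' ∧
      x = val h₀ Vd σ H'} ≤ val h₀ Vd σ H :=
  csInf_le (((finite_setOf_cons h₀).image (val h₀ Vd σ)).bddBelow.mono <| by
      rintro _ ⟨_, H', hH', -, rfl⟩
      exact ⟨H', hH'.1.1, rfl⟩)
    ⟨h, H, hBR, List.prefix_refl H, rfl⟩

open Classical in
/-- The order condition holds for every consistent extension `K`; it is there to transport `c`
to `C (K.getLastD h₀)`. -/
noncomputable def deviateFrom (pb : ∀ {h h' : 𝓗}, h ≤ h' → C h → C h')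
    (σ : (H : List 𝓗) → C (H.getLastD h₀)) (H : List 𝓗) (c : C (H.getLastD h₀))
    (K : List 𝓗) : C (K.getLastD h₀) :=
  if hK : H <+: K ∧ H.getLastD h₀ ≤ K.getLastD h₀ then pb hK.2 c else σ K

variable {pb : ∀ {h h' : 𝓗}, h ≤ h' → C h → C h'} {σ : (H : List 𝓗) → C (H.getLastD h₀)}
  {H K : List 𝓗} {c : C (H.getLastD h₀)}

theorem val_deviateFrom_of_isPrefix {V : (h : 𝓗) → C h → ℝ}
    (hV : ∀ {h h' : 𝓗} (l : h ≤ h') (c : C h), V h' (pb l c) = V h c)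
    (hK : Cons h₀ K) (hHK : H <+: K) :
    val h₀ V (deviateFrom pb σ H c) K = V (H.getLastD h₀) c := by
  rw [val, deviateFrom, dif_pos ⟨hHK, hK.getLastD_le_of_isPrefix hHK⟩, hV]

theorem deviateFrom_of_not_isPrefix (hHK : ¬ H <+: K) : deviateFrom pb σ H c K = σ K :=
  dif_neg fun h => hHK h.1

theorem dev_deviateFrom (hc : pb le_rfl c ≠ σ H) : Dev h₀ σ (deviateFrom pb σ H c) H :=
  ⟨fun _ hK hlt => deviateFrom_of_not_isPrefix fun hHK =>
      (hK.getLastD_le_of_isPrefix hHK).not_gt hlt,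
    by rwa [deviateFrom, dif_pos ⟨List.prefix_refl H, le_rfl⟩]⟩

theorem ICs.deviateFrom {Ve : (h : 𝓗) → C h → ℝ}
    (hpbe : ∀ {h h' : 𝓗} (l : h ≤ h') (c : C h), Ve h' (pb l c) = Ve h c)
    (hIC : ICs h₀ Ve σ)
    (hc : ∀ K, K ≠ [] → K <+: H → K ≠ H → val h₀ Ve σ K ≤ Ve (H.getLastD h₀) c) :
    ICs h₀ Ve (deviateFrom pb σ H c) := by
  intro K₁ K₂ hK₁ hK₂ hpre
  have hK₂c := hK₁.of_isPrefix hpre hK₂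
  by_cases hH₁ : H <+: K₁
  · rw [val_deviateFrom_of_isPrefix hpbe hK₁ hH₁]
    by_cases hH₂ : H <+: K₂
    · rw [val_deviateFrom_of_isPrefix hpbe hK₂c hH₂]
    · have hK₂H := (List.prefix_or_prefix_of_prefix hpre hH₁).resolve_right hH₂
      rw [val, deviateFrom_of_not_isPrefix hH₂]
      exact hc K₂ hK₂ hK₂H fun e => hH₂ (e ▸ List.prefix_refl H)
  · have hH₂ : ¬ H <+: K₂ := fun h => hH₁ (h.trans hpre)
    rw [val, val, deviateFrom_of_not_isPrefix hH₁, deviateFrom_of_not_isPrefix hH₂]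
    exact hIC K₁ K₂ hK₁ hK₂ hpre

theorem setOf_extension_val_deviateFrom {Vd : (h : 𝓗) → C h → ℝ}
    (hpbd : ∀ {h h' : 𝓗} (l : h ≤ h') (c : C h), Vd h' (pb l c) = Vd h c) (hH : Cons h₀ H) :
    {x : ℝ | ∃ H', Cons h₀ H' ∧ H <+: H' ∧ x = val h₀ Vd (deviateFrom pb σ H c) H'} =
      {Vd (H.getLastD h₀) c} := by
  ext x
  constructor
  · rintro ⟨K, hK, hHK, rfl⟩
    exact val_deviateFrom_of_isPrefix hpbd hK hHK
  · rintro rfl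
    exact ⟨H, hH, List.prefix_refl H,
      (val_deviateFrom_of_isPrefix hpbd hH (List.prefix_refl H)).symm⟩

end Strategies

/-- Lemma A.2: every robust incentive compatible strategy is
strongly myopically optimal at every best-response chain: at such `H`, `σ H`
maximizes `Vd` subject to `Ve ≥ V̄e(H, σ)`, the maximal expert value achievable
by any best response of any type strictly coarser than `H₋₁`. -/
theorem robust_implies_strongly_myopic
    {𝓗 : Type} [Fintype 𝓗] [PartialOrder 𝓗] (h₀ : 𝓗)
    (C : 𝓗 → Type) (Vd Ve : (h : 𝓗) → C h → ℝ)
    (pb : ∀ {h h' : 𝓗}, h ≤ h' → C h → C h')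
    (hpbd : ∀ {h h' : 𝓗} (l : h ≤ h') (c : C h), Vd h' (pb l c) = Vd h c)
    (hpbe : ∀ {h h' : 𝓗} (l : h ≤ h') (c : C h), Ve h' (pb l c) = Ve h c)
    (σ : (H : List 𝓗) → C (H.getLastD h₀))
    (hIC : ICs h₀ Ve σ) (hrob : Robust h₀ Vd Ve σ) :
    ∀ H : List 𝓗, Cons h₀ H → BRs h₀ Ve σ (H.getLastD h₀) H →
      ∀ c : C (H.getLastD h₀),
        (2 ≤ H.length →
          sSup {x : ℝ | ∃ (h : 𝓗) (H' : List 𝓗),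
              h < H.getLastD h₀ ∧ BRs h₀ Ve σ h H' ∧ x = val h₀ Ve σ H'} ≤
            Ve (H.getLastD h₀) c) →
        Vd (H.getLastD h₀) c ≤ val h₀ Vd σ H := by
  intro H hH hBR c hc
  by_cases hσH : pb le_rfl c = σ H
  · rw [← hpbd le_rfl c, hσH, val]
  have hIC' : ICs h₀ Ve (deviateFrom pb σ H c) :=
    hIC.deviateFrom hpbe fun K hK hKH hne =>
      (val_le_sSup_coarser_BRs hH hK hKH hne).trans (hc (hKH.two_le_length hK hne))
  have hworst := hrob H hH ⟨_, H, hBR, List.prefix_refl H⟩ _ hIC' (dev_deviateFrom hσH)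
  rw [setOf_extension_val_deviateFrom hpbd hH, csInf_singleton] at hworst
  exact hworst.trans (csInf_BRs_extension_le hBR)
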